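/- arXiv:1402.0773 — 2 statements merged into one kernel-verified Lean document; each statement's English description precedes it below -/
import Mathlib

section
/- Let 𝒰, 𝒱 be positive definite functionals on real polynomials, m ≥ 1, λ > 0, and ⟨p,r⟩_{λ,ν} = ⟨𝒰, pr⟩ + λ⟨𝒱, (D_ν^m p)(D_ν^m r)⟩ with Sobolev monic OPS {S_n(x;λ,ν)}. Define T_n(x;ν) = lim_{λ→∞} S_n(x;λ,ν) (which exists as a monic polynomial of degree n). Then ⟨𝒰, T_n(x;ν)·x^i⟩ = 0 for all i < min{n, m}. -/
open Polynomial Finset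

/-- The forward difference operator (D_ω p)(x) = (p(x+ω)-p(x))/ω. -/
noncomputable def Dw (ω : ℝ) : Polynomial ℝ →ₗ[ℝ] Polynomial ℝ where
  toFun p := C ω⁻¹ * (p.comp (X + C ω) - p)
  map_add' p r := by
    ext n
    simp [add_comp, coeff_C_mul, coeff_sub, coeff_add]
    ring
  map_smul' c p := by
    ext n
    simp [smul_comp, coeff_C_mul, coeff_smul, coeff_sub, smul_eq_mul]
    ring

/-- The q-derivative operator (D_q p)(x) = (p(qx)-p(x))/((q-1)x). -/
noncomputable def Dq (q : ℝ) : Polynomial ℝ →ₗ[ℝ] Polynomial ℝ where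
  toFun p := C (q-1)⁻¹ * (p.comp (C q * X) - p).divX
  map_add' p r := by
    ext n
    simp [add_comp, coeff_divX, coeff_C_mul, coeff_sub, coeff_add]
    ring
  map_smul' c p := by
    ext n
    simp [smul_comp, coeff_divX, coeff_C_mul, coeff_smul, coeff_sub, smul_eq_mul]
    ring

/-- η_{n,m,ω} = (n+1)_m. -/
noncomputable def etaW (m n : ℕ) : ℝ := ∏ k ∈ Finset.range m, ((n : ℝ) + 1 + k)

/-- η_{n,m,q} = (q^{n+1};q)_m/(1-q)^m. -/
noncomputable def etaQ (q : ℝ) (m n : ℕ) : ℝ :=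
  (∏ k ∈ Finset.range m, (1 - q ^ (n + 1 + k))) / (1 - q) ^ m

/-- `D` is the difference operator D_ν, with `η n = η_{n,m,ν}` its order-`m` normalization
constants, for ν = ω ∈ ℝ∖{0} or ν = q ∈ ℝ∖{0,±1}. -/
def NuData (D : Polynomial ℝ →ₗ[ℝ] Polynomial ℝ) (m : ℕ) (η : ℕ → ℝ) : Prop :=
  (∃ ω : ℝ, ω ≠ 0 ∧ D = Dw ω ∧ η = etaW m) ∨
  (∃ q : ℝ, q ≠ 0 ∧ q ≠ 1 ∧ q ≠ -1 ∧ D = Dq q ∧ η = etaQ q m)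

/-- A positive definite linear functional. -/
def PosDef (U : Polynomial ℝ →ₗ[ℝ] ℝ) : Prop :=
  ∀ p : Polynomial ℝ, p ≠ 0 → 0 < U (p * p)

/-- `P` is the sequence of monic orthogonal polynomials of the functional `U`. -/
def IsMOPS (U : Polynomial ℝ →ₗ[ℝ] ℝ) (P : ℕ → Polynomial ℝ) : Prop :=
  (∀ n, (P n).Monic) ∧ (∀ n, (P n).natDegree = n) ∧ ∀ n k, n ≠ k → U (P n * P k) = 0

/-- The Sobolev bilinear form ⟨p,r⟩_{λ,ν} = ⟨𝒰, pr⟩ + λ⟨𝒱, (D_ν^m p)(D_ν^m r)⟩. -/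
noncomputable def sob (U V : Polynomial ℝ →ₗ[ℝ] ℝ) (lam : ℝ)
    (D : Polynomial ℝ →ₗ[ℝ] Polynomial ℝ) (m : ℕ) (p r : Polynomial ℝ) : ℝ :=
  U (p * r) + lam * V (((D ^ m) p) * ((D ^ m) r))

/-- `S` is the monic OPS of the Sobolev inner product. -/
def IsSobMOPS (U V : Polynomial ℝ →ₗ[ℝ] ℝ) (lam : ℝ)
    (D : Polynomial ℝ →ₗ[ℝ] Polynomial ℝ) (m : ℕ) (S : ℕ → Polynomial ℝ) : Prop :=
  (∀ n, (S n).Monic) ∧ (∀ n, (S n).natDegree = n) ∧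
    ∀ n k, n ≠ k → sob U V lam D m (S n) (S k) = 0

/-- The monic normalized m-th difference derivatives Pₙ^{[m,ν]} = D_ν^m P_{n+m}/η_{n,m,ν}. -/
noncomputable def Pm (D : Polynomial ℝ →ₗ[ℝ] Polynomial ℝ) (η : ℕ → ℝ) (m : ℕ)
    (P : ℕ → Polynomial ℝ) (n : ℕ) : Polynomial ℝ :=
  C (η n)⁻¹ * ((D ^ m) (P (n + m)))

/-- (𝒰,𝒱) is an (M,N)-D_ν-coherent pair of order m, witnessed by the MOPS `P`, `Q` and
coefficients `a`, `b` (with the conventions a₀ₙ = b₀ₙ = 1, aᵢₙ = bᵢₙ = 0 for i > n). -/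
def Coherent (D : Polynomial ℝ →ₗ[ℝ] Polynomial ℝ) (η : ℕ → ℝ) (m : ℕ)
    (P Q : ℕ → Polynomial ℝ) (M N : ℕ) (a b : ℕ → ℕ → ℝ) : Prop :=
  (∀ n, a 0 n = 1) ∧ (∀ n, b 0 n = 1) ∧
  (∀ i n, n < i → a i n = 0) ∧ (∀ i n, n < i → b i n = 0) ∧
  (∀ n, M ≤ n → a M n ≠ 0) ∧ (∀ n, N ≤ n → b N n ≠ 0) ∧
  ∀ n, ∑ i ∈ Finset.range (M + 1), a i n • Pm D η m P (n - i)
      = ∑ i ∈ Finset.range (N + 1), b i n • Q (n - i)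

/-!
D_ν strictly lowers degrees, so D_ν^m annihilates xⁱ for i < m and the Sobolev product
⟨S_n(·;λ,ν), xⁱ⟩_{λ,ν} reduces to ⟨𝒰, S_n(·;λ,ν) xⁱ⟩. This vanishes for i < n, because a monic
orthogonal polynomial is orthogonal to every polynomial of lower degree. Being linear in the
coefficients of S_n(·;λ,ν), the identity passes to the limit λ → ∞.
-/

open Filter Topology

namespace Polynomial

theorem degree_taylor_sub_lt {R : Type*} [Ring R] (r : R) {p : R[X]} (hp : p ≠ 0) :
    (taylor r p - p).degree < p.degree :=
  degree_taylor p r ▸ degree_sub_lt_left (degree_taylor p r) ((taylor_eq_zero r p).not.2 hp)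
    (leadingCoeff_taylor r p)

theorem degree_comp_C_mul_X_le {R : Type*} [Semiring R] (q : R) (p : R[X]) :
    (p.comp (C q * X)).degree ≤ p.degree := by
  rcases eq_or_ne p 0 with rfl | hp
  · simp
  rw [degree_eq_natDegree hp]
  refine degree_le_of_natDegree_le (natDegree_comp_le.trans ?_)
  simpa using Nat.mul_le_mul_left p.natDegree ((natDegree_C_mul_le q X).trans natDegree_X_le)

theorem degree_Dw_lt (ω : ℝ) {p : ℝ[X]} (hp : p ≠ 0) : (Dw ω p).degree < p.degree := by
  change (C ω⁻¹ * (taylor ω p - p)).degree < _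
  rw [← smul_eq_C_mul]
  exact (degree_smul_le _ _).trans_lt (degree_taylor_sub_lt ω hp)

theorem degree_Dq_lt (q : ℝ) {p : ℝ[X]} (hp : p ≠ 0) : (Dq q p).degree < p.degree := by
  change (C (q - 1)⁻¹ * _).degree < _
  rw [← smul_eq_C_mul]
  refine (degree_smul_le _ _).trans_lt ?_
  by_cases h0 : p.comp (C q * X) - p = 0
  · simpa [h0, bot_lt_iff_ne_bot] using hp
  · exact (degree_divX_lt h0).trans_le
      ((degree_sub_le _ _).trans (max_le (degree_comp_C_mul_X_le q p) le_rfl))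

theorem pow_apply_eq_zero_of_degree_lt {R : Type*} [CommSemiring R] {D : R[X] →ₗ[R] R[X]}
    (hD : ∀ p : R[X], p ≠ 0 → (D p).degree < p.degree) :
    ∀ {j : ℕ} {p : R[X]}, p.degree < j → (D ^ j) p = 0
  | 0, p, hp => by simp_all
  | j + 1, p, hp => by
    rw [pow_succ, Module.End.mul_apply]
    refine pow_apply_eq_zero_of_degree_lt hD ?_
    rcases eq_or_ne p 0 with rfl | hp0
    · simp
    · exact (hD p hp0).trans_le (Order.le_of_lt_succ (by rwa [← WithBot.succ_coe]))

theorem _root_.LinearMap.apply_eq_zero_of_degree_lt {R M : Type*} [CommRing R] [AddCommGroup M]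
    [Module R M] (L : R[X] →ₗ[R] M) {P : ℕ → R[X]} (hPmonic : ∀ k, (P k).Monic)
    (hPdeg : ∀ k, (P k).natDegree = k) :
    ∀ {n : ℕ}, (∀ k < n, L (P k) = 0) → ∀ {r : R[X]}, r.degree < n → L r = 0
  | 0, _, r, hr => by simp_all
  | n + 1, hL, r, hr => by
    have hlow : (r - r.coeff n • P n).degree < n := by
      rw [degree_lt_iff_coeff_zero] at hr ⊢
      intro k hk
      rcases hk.eq_or_lt with rfl | hk
      · simp [hPdeg n ▸ (hPmonic n).coeff_natDegree]
      · simp [hr k hk, coeff_eq_zero_of_natDegree_lt (hPdeg n ▸ hk)]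
    have := L.apply_eq_zero_of_degree_lt hPmonic hPdeg (fun k hk => hL k (by omega)) hlow
    rwa [map_sub, map_smul, hL n n.lt_succ_self, smul_zero, sub_zero] at this

theorem _root_.LinearMap.eq_sum_coeff_smul {R M : Type*} [CommSemiring R] [AddCommMonoid M]
    [Module R M] (L : R[X] →ₗ[R] M) {p : R[X]} {N : ℕ} (hp : p.natDegree < N) :
    L p = ∑ j ∈ range N, p.coeff j • L (X ^ j) := by
  conv_lhs => rw [p.as_sum_range' N hp]
  simp [map_sum, ← smul_X_eq_monomial]

theorem tendsto_apply_of_tendsto_coeff {R M ι : Type*} [CommSemiring R] [TopologicalSpace R]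
    [AddCommMonoid M] [Module R M] [TopologicalSpace M] [ContinuousAdd M] [ContinuousSMul R M]
    (L : R[X] →ₗ[R] M) {l : Filter ι} {f : ι → R[X]} {g : R[X]} {N : ℕ}
    (hf : ∀ᶠ t in l, (f t).natDegree < N) (hg : g.natDegree < N)
    (h : ∀ j, Tendsto (fun t => (f t).coeff j) l (𝓝 (g.coeff j))) :
    Tendsto (fun t => L (f t)) l (𝓝 (L g)) := by
  rw [L.eq_sum_coeff_smul hg]
  refine (tendsto_finsetSum _ fun j _ => (h j).smul_const _).congr' ?_
  filter_upwards [hf] with t ht using (L.eq_sum_coeff_smul ht).symm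

end Polynomial

theorem NuData.degree_apply_lt {D : ℝ[X] →ₗ[ℝ] ℝ[X]} {m : ℕ} {η : ℕ → ℝ} (hν : NuData D m η)
    (p : ℝ[X]) (hp : p ≠ 0) : (D p).degree < p.degree := by
  rcases hν with ⟨ω, -, rfl, -⟩ | ⟨q, -, -, -, rfl, -⟩
  exacts [degree_Dw_lt ω hp, degree_Dq_lt q hp]

noncomputable def sobForm (U V : ℝ[X] →ₗ[ℝ] ℝ) (lam : ℝ) (D : ℝ[X] →ₗ[ℝ] ℝ[X]) (m : ℕ) :
    LinearMap.BilinForm ℝ ℝ[X] :=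
  (LinearMap.mul ℝ ℝ[X]).compr₂ U +
    lam • ((LinearMap.mul ℝ ℝ[X]).compl₁₂ (D ^ m) (D ^ m)).compr₂ V

theorem sobForm_apply (U V : ℝ[X] →ₗ[ℝ] ℝ) (lam : ℝ) (D : ℝ[X] →ₗ[ℝ] ℝ[X]) (m : ℕ)
    (p r : ℝ[X]) : sobForm U V lam D m p r = sob U V lam D m p r :=
  rfl

theorem stmt13_general (D : Polynomial ℝ →ₗ[ℝ] Polynomial ℝ) (η : ℕ → ℝ) (m : ℕ)
    (hν : NuData D m η) (U V : Polynomial ℝ →ₗ[ℝ] ℝ)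
    (S : ℝ → ℕ → Polynomial ℝ)
    (hS : ∀ lam : ℝ, 0 < lam → IsSobMOPS U V lam D m (S lam))
    (T : ℕ → Polynomial ℝ) (hTdeg : ∀ n, (T n).natDegree = n)
    (hT : ∀ n i : ℕ, Filter.Tendsto (fun lam => (S lam n).coeff i)
      Filter.atTop (nhds ((T n).coeff i))) :
    ∀ n i : ℕ, i < min n m → U (T n * X ^ i) = 0 := by
  intro n i hi
  rw [lt_min_iff] at hi
  have hXi : ∀ k, i < k → (X ^ i : ℝ[X]).degree < k := fun k hk => by
    rwa [degree_X_pow, Nat.cast_lt]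
  have horth : ∀ lam > 0, U (S lam n * X ^ i) = 0 := by
    intro lam hlam
    obtain ⟨hmonic, hdeg, hSorth⟩ := hS lam hlam
    have hDm : (D ^ m) (X ^ i) = 0 :=
      pow_apply_eq_zero_of_degree_lt hν.degree_apply_lt (hXi m hi.2)
    have := (sobForm U V lam D m (S lam n)).apply_eq_zero_of_degree_lt hmonic hdeg
      (fun k hk => hSorth n k hk.ne') (hXi n hi.1)
    simpa [sobForm_apply, sob, hDm] using this
  have hlim : Tendsto (fun lam => U (S lam n * X ^ i)) atTop (𝓝 (U (T n * X ^ i))) :=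
    tendsto_apply_of_tendsto_coeff (U ∘ₗ LinearMap.mulRight ℝ (X ^ i))
      (eventually_gt_atTop 0 |>.mono fun lam hlam => ((hS lam hlam).2.1 n).trans_lt n.lt_succ_self)
      ((hTdeg n).trans_lt n.lt_succ_self) (hT n)
  exact tendsto_nhds_unique_of_eventuallyEq hlim tendsto_const_nhds
    ((eventually_gt_atTop 0).mono horth)

/-- the limit polynomials Tₙ(x;ν) = lim_{λ→∞} Sₙ(x;λ,ν) satisfy
⟨𝒰, Tₙ xⁱ⟩ = 0 for all i < min{n,m}. -/
theorem stmt13 (D : Polynomial ℝ →ₗ[ℝ] Polynomial ℝ) (η : ℕ → ℝ) (m : ℕ)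
    (hν : NuData D m η) (hm : 1 ≤ m) (U V : Polynomial ℝ →ₗ[ℝ] ℝ)
    (hU : PosDef U) (hV : PosDef V)
    (S : ℝ → ℕ → Polynomial ℝ)
    (hS : ∀ lam : ℝ, 0 < lam → IsSobMOPS U V lam D m (S lam))
    (T : ℕ → Polynomial ℝ) (hTmonic : ∀ n, (T n).Monic) (hTdeg : ∀ n, (T n).natDegree = n)
    (hT : ∀ n i : ℕ, Filter.Tendsto (fun lam => (S lam n).coeff i)
      Filter.atTop (nhds ((T n).coeff i))) :
    ∀ n i : ℕ, i < min n m → U (T n * X ^ i) = 0 :=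
  stmt13_general D η m hν U V S hS T hTdeg hT
end

section
/- Let (𝒰,𝒱) be an (M,N)-D_ν-coherent pair of order m of positive definite functionals, with Sobolev norms s_{n,ν} = ⟨S_n, S_n⟩_{λ,ν} and connection coefficients c_{j,n,λ,ν} as in the structure relation between {P_n} and {S_n}. Then for 0 ≤ j ≤ K = max{M,N} and n ≥ 0: s_{n+m,ν}·c_{j,n+j,λ,ν} = ζ_{j,n,λ,ν} − Σ_{ℓ=1}^{K−j} c_{ℓ,n,λ,ν}·c_{j+ℓ,n+j,λ,ν}·s_{n−ℓ+m,ν}, where ζ_{j,n,λ,ν} = Σ_{i=j}^{M} ã_{i,n+j} ã_{i−j,n} ⟨𝒰, P_{n+j−i+m}²⟩ + λ Σ_{i=j}^{N} b̃_{i,n+j} b̃_{i−j,n} ⟨𝒱, Q_{n+j−i}²⟩, with ã_{i,n} = (η_{n,m,ν}/η_{n−i,m,ν})a_{i,n} and b̃_{i,n} = η_{n,m,ν} b_{i,n}, c_{0,n,λ,ν} = 1, and a_{0,n} = b_{0,n} = 1. -/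
open Polynomial Finset

/-!
Put `R_k = Σ_{i=0}^{M} ã_{i,k} P_{k-i+m}` (`coherenceSum`). The coherence relation gives
`D_ν^m R_k = Σ_{i=0}^{N} b̃_{i,k} Q_{k-i}` and the structure relation gives
`R_k = Σ_{t=0}^{K} c_{t,k} S_{k-t+m}`. Expand `⟨R_{n+j}, R_n⟩_{λ,ν}` both ways: in the first form
the orthogonality of `P` for `𝒰` and of `Q` for `𝒱` keeps only the terms `P_{n+j-i+m}²`, `Q_{n+j-i}²`,
which add up to `ζ_{j,n}`; in the second form the Sobolev orthogonality of `S` keeps only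
`s_{n+m} c_{j,n+j} + Σ_ℓ c_{ℓ,n} c_{j+ℓ,n+j} s_{n-ℓ+m}`.
-/

lemma etaW_pos (m n : ℕ) : 0 < etaW m n :=
  prod_pos fun _ _ => by positivity

lemma etaQ_ne_zero {q : ℝ} (hq1 : q ≠ 1) (hqn : q ≠ -1) (m n : ℕ) : etaQ q m n ≠ 0 := by
  refine div_ne_zero (prod_ne_zero_iff.mpr fun k _ => ?_) (pow_ne_zero _ (sub_ne_zero.mpr hq1.symm))
  rw [sub_ne_zero, ne_comm, Ne, pow_eq_one_iff_of_ne_zero (by omega)]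
  tauto

lemma NuData.eta_ne_zero {D : Polynomial ℝ →ₗ[ℝ] Polynomial ℝ} {m : ℕ} {η : ℕ → ℝ}
    (hν : NuData D m η) (n : ℕ) : η n ≠ 0 := by
  rcases hν with ⟨-, -, -, rfl⟩ | ⟨q, -, hq1, hqn, -, rfl⟩
  · exact (etaW_pos m n).ne'
  · exact etaQ_ne_zero hq1 hqn m n

lemma sum_Icc_eq_add_sum_Icc_one {M : Type*} [AddCommMonoid M] (f : ℕ → M) {j K : ℕ}
    (hjK : j ≤ K) : ∑ t ∈ Icc j K, f t = f j + ∑ l ∈ Icc 1 (K - j), f (j + l) := by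
  have hshift : Icc (j + 1) K = (Icc 1 (K - j)).map (addLeftEmbedding j) := by
    rw [map_add_left_Icc, add_comm j 1, Nat.add_sub_cancel' hjK]
  rw [← add_sum_Ioc_eq_sum_Icc hjK, ← Icc_add_one_left_eq_Ioc, hshift, sum_map]
  rfl

lemma sum_range_succ_eq_add_sum_Icc_one {M : Type*} [AddCommMonoid M] (f : ℕ → M) (n : ℕ) :
    ∑ i ∈ range (n + 1), f i = f 0 + ∑ i ∈ Icc 1 n, f i := by
  rw [Nat.range_succ_eq_Icc_zero, sum_Icc_eq_add_sum_Icc_one f (Nat.zero_le n)]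
  simp

lemma LinearMap.map_sum_smul_mul_sum_smul {ι R A : Type*} [CommSemiring R] [Semiring A]
    [Algebra R A] (W : A →ₗ[R] R) (s t : Finset ι) (f g : ι → R) (p q : ι → A) :
    W ((∑ i ∈ s, f i • p i) * ∑ i' ∈ t, g i' • q i')
      = ∑ i ∈ s, ∑ i' ∈ t, f i * g i' * W (p i * q i') := by
  simp only [sum_mul_sum, smul_mul_smul_comm, map_sum, map_smul, smul_eq_mul]

lemma sob_sum_smul_sum_smul {ι : Type*} (U V : Polynomial ℝ →ₗ[ℝ] ℝ) (lam : ℝ)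
    (D : Polynomial ℝ →ₗ[ℝ] Polynomial ℝ) (m : ℕ) (s t : Finset ι) (f g : ι → ℝ)
    (p q : ι → Polynomial ℝ) :
    sob U V lam D m (∑ i ∈ s, f i • p i) (∑ i' ∈ t, g i' • q i')
      = ∑ i ∈ s, ∑ i' ∈ t, f i * g i' * sob U V lam D m (p i) (q i') := by
  rw [sob, map_sum, map_sum]
  simp only [map_smul]
  rw [LinearMap.map_sum_smul_mul_sum_smul, LinearMap.map_sum_smul_mul_sum_smul, mul_sum,
    ← sum_add_distrib]
  refine sum_congr rfl fun i _ => ?_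
  rw [mul_sum, ← sum_add_distrib]
  refine sum_congr rfl fun i' _ => ?_
  rw [sob]
  ring

lemma sum_range_sum_range_eq_sum_Icc_of_orthogonal {R : Type*} [Semiring R] (n j A : ℕ)
    (f g : ℕ → R) (β : ℕ → ℕ → R) (hf : ∀ i, n + j < i → f i = 0)
    (hg : ∀ i, n < i → g i = 0) (hβ : ∀ x y, x ≠ y → β x y = 0) :
    ∑ i ∈ range (A + 1), ∑ i' ∈ range (A + 1), f i * g i' * β (n + j - i) (n - i')
      = ∑ i ∈ Icc j A, f i * g (i - j) * β (n + j - i) (n + j - i) := by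
  have hoff : ∀ i i', i ≠ i' + j → f i * g i' * β (n + j - i) (n - i') = 0 := by
    intro i i' hii'
    by_cases hi : n + j < i
    · rw [hf i hi, zero_mul, zero_mul]
    by_cases hi' : n < i'
    · rw [hg i' hi', mul_zero, zero_mul]
    rw [hβ _ _ (by omega), mul_zero]
  have hdiag : ∀ i, j ≤ i →
      f i * g (i - j) * β (n + j - i) (n - (i - j))
        = f i * g (i - j) * β (n + j - i) (n + j - i) := by
    intro i hji
    by_cases hi : n + j < i
    · simp only [hf i hi, zero_mul]
    rw [show n - (i - j) = n + j - i by omega]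
  calc ∑ i ∈ range (A + 1), ∑ i' ∈ range (A + 1), f i * g i' * β (n + j - i) (n - i')
      = ∑ i ∈ range (A + 1) with j ≤ i, f i * g (i - j) * β (n + j - i) (n + j - i) := by
        rw [sum_filter]
        refine sum_congr rfl fun i hi => ?_
        rw [mem_range] at hi
        split_ifs with hji
        · rw [sum_eq_single_of_mem (i - j) (mem_range.2 (by omega))
            fun i' _ _ => hoff i i' (by omega), hdiag i hji]
        · exact sum_eq_zero fun i' _ => hoff i i' (by omega)
    _ = ∑ i ∈ Icc j A, f i * g (i - j) * β (n + j - i) (n + j - i) := by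
        congr 1
        ext i
        simp only [mem_filter, mem_range, mem_Icc]
        omega

noncomputable def coherenceSum (η : ℕ → ℝ) (a : ℕ → ℕ → ℝ) (P : ℕ → Polynomial ℝ) (m M k : ℕ) :
    Polynomial ℝ :=
  ∑ i ∈ range (M + 1), (η k / η (k - i) * a i k) • P (k - i + m)

lemma Coherent.pow_apply_coherenceSum {D : Polynomial ℝ →ₗ[ℝ] Polynomial ℝ} {η : ℕ → ℝ} {m : ℕ}
    {P Q : ℕ → Polynomial ℝ} {M N : ℕ} {a b : ℕ → ℕ → ℝ} (hcoh : Coherent D η m P Q M N a b)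
    (k : ℕ) :
    (D ^ m) (coherenceSum η a P m M k) = ∑ i ∈ range (N + 1), (η k * b i k) • Q (k - i) := by
  obtain ⟨-, -, -, -, -, -, hPQ⟩ := hcoh
  have hterm : ∀ i, (η k / η (k - i) * a i k) • (D ^ m) (P (k - i + m))
      = η k • a i k • Pm D η m P (k - i) := by
    intro i
    rw [Pm, ← smul_eq_C_mul, smul_smul, smul_smul, div_eq_mul_inv]
    ring_nf
  rw [coherenceSum, map_sum, sum_congr rfl fun i _ => by rw [map_smul, hterm], ← smul_sum, hPQ k,
    smul_sum]
  simp only [smul_smul]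

lemma Coherent.sob_coherenceSum {D : Polynomial ℝ →ₗ[ℝ] Polynomial ℝ} {η : ℕ → ℝ} {m : ℕ}
    {U V : Polynomial ℝ →ₗ[ℝ] ℝ} {P Q : ℕ → Polynomial ℝ} {M N : ℕ} {a b : ℕ → ℕ → ℝ}
    (hcoh : Coherent D η m P Q M N a b) (hP : IsMOPS U P) (hQ : IsMOPS V Q) (lam : ℝ)
    (j n : ℕ) :
    sob U V lam D m (coherenceSum η a P m M (n + j)) (coherenceSum η a P m M n)
      = ∑ i ∈ Icc j M, (η (n + j) / η (n + j - i) * a i (n + j)) *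
            (η n / η (n - (i - j)) * a (i - j) n) * U (P (n + j - i + m) * P (n + j - i + m))
        + lam * ∑ i ∈ Icc j N, (η (n + j) * b i (n + j)) * (η n * b (i - j) n) *
            V (Q (n + j - i) * Q (n + j - i)) := by
  rw [sob, hcoh.pow_apply_coherenceSum, hcoh.pow_apply_coherenceSum]
  obtain ⟨-, -, hav, hbv, -⟩ := hcoh
  rw [coherenceSum, coherenceSum, LinearMap.map_sum_smul_mul_sum_smul,
    LinearMap.map_sum_smul_mul_sum_smul,
    sum_range_sum_range_eq_sum_Icc_of_orthogonal n j M _ (fun i => η n / η (n - i) * a i n)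
      (fun x y => U (P (x + m) * P (y + m))) (fun i hi => by simp [hav i _ hi])
      (fun i hi => by simp [hav i n hi]) fun x y hxy => hP.2.2 _ _ (by omega),
    sum_range_sum_range_eq_sum_Icc_of_orthogonal n j N _ (fun i => η n * b i n)
      (fun x y => V (Q x * Q y)) (fun i hi => by simp [hbv i _ hi])
      (fun i hi => by simp [hbv i n hi]) hQ.2.2]

lemma IsSobMOPS.sob_sum_smul_sum_smul_shift {U V : Polynomial ℝ →ₗ[ℝ] ℝ} {lam : ℝ}
    {D : Polynomial ℝ →ₗ[ℝ] Polynomial ℝ} {m : ℕ} {S : ℕ → Polynomial ℝ}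
    (hS : IsSobMOPS U V lam D m S) {c : ℕ → ℕ → ℝ} (hc0 : ∀ n, c 0 n = 1)
    (hcv : ∀ j n, n < j → c j n = 0) {j K : ℕ} (hj : j ≤ K) (n : ℕ) :
    sob U V lam D m (∑ t ∈ range (K + 1), c t (n + j) • S (n + j - t + m))
        (∑ t ∈ range (K + 1), c t n • S (n - t + m))
      = sob U V lam D m (S (n + m)) (S (n + m)) * c j (n + j)
        + ∑ l ∈ Icc 1 (K - j), c l n * c (j + l) (n + j) *
            sob U V lam D m (S (n - l + m)) (S (n - l + m)) := by
  rw [sob_sum_smul_sum_smul,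
    sum_range_sum_range_eq_sum_Icc_of_orthogonal n j _ _ (fun t => c t n)
      (fun x y => sob U V lam D m (S (x + m)) (S (y + m))) (fun t ht => hcv t _ ht)
      (fun t ht => hcv t n ht) fun x y hxy => hS.2.2 _ _ (by omega),
    sum_Icc_eq_add_sum_Icc_one _ hj]
  have hshift : ∀ l, n + j - (j + l) = n - l := fun l => by omega
  simp only [Nat.sub_self, hc0, Nat.add_sub_cancel, Nat.add_sub_cancel_left, hshift]
  congr 1
  · ring
  · exact sum_congr rfl fun l _ => by ring

theorem stmt18_general (D : Polynomial ℝ →ₗ[ℝ] Polynomial ℝ) (η : ℕ → ℝ) (m : ℕ)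
    (hν : NuData D m η) (lam : ℝ)
    (U V : Polynomial ℝ →ₗ[ℝ] ℝ)
    (P Q S : ℕ → Polynomial ℝ) (hP : IsMOPS U P) (hQ : IsMOPS V Q)
    (hS : IsSobMOPS U V lam D m S)
    (M N : ℕ) (a b : ℕ → ℕ → ℝ) (hcoh : Coherent D η m P Q M N a b)
    (c : ℕ → ℕ → ℝ) (hc0 : ∀ n : ℕ, c 0 n = 1) (hcv : ∀ j n : ℕ, n < j → c j n = 0)
    (hrel : ∀ n : ℕ,
      P (n + m) + ∑ i ∈ Finset.Icc 1 M, (η n / η (n - i) * a i n) • P (n - i + m)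
        = S (n + m) + ∑ j ∈ Finset.Icc 1 (max M N), c j n • S (n - j + m)) :
    ∀ j ≤ max M N, ∀ n : ℕ,
      sob U V lam D m (S (n + m)) (S (n + m)) * c j (n + j)
        = (∑ i ∈ Finset.Icc j M,
              (η (n + j) / η (n + j - i) * a i (n + j)) *
              (η n / η (n - (i - j)) * a (i - j) n) *
              U (P (n + j - i + m) * P (n + j - i + m))
            + lam * ∑ i ∈ Finset.Icc j N,
              (η (n + j) * b i (n + j)) * (η n * b (i - j) n) *
              V (Q (n + j - i) * Q (n + j - i)))
          - ∑ l ∈ Finset.Icc 1 (max M N - j),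
              c l n * c (j + l) (n + j) *
              sob U V lam D m (S (n - l + m)) (S (n - l + m)) := by
  intro j hj n
  have hRS : ∀ k, coherenceSum η a P m M k
      = ∑ t ∈ range (max M N + 1), c t k • S (k - t + m) := by
    intro k
    rw [coherenceSum, sum_range_succ_eq_add_sum_Icc_one, sum_range_succ_eq_add_sum_Icc_one, hc0,
      hcoh.1, Nat.sub_zero, div_self (hν.eta_ne_zero k), one_mul, one_smul, one_smul]
    exact hrel k
  rw [← hcoh.sob_coherenceSum hP hQ, hRS, hRS, hS.sob_sum_smul_sum_smul_shift hc0 hcv hj]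
  ring

/-- the recursion
s_{n+m}·c_{j,n+j} = ζ_{j,n} − Σ_{ℓ=1}^{K−j} c_{ℓ,n}·c_{j+ℓ,n+j}·s_{n−ℓ+m}
for 0 ≤ j ≤ K = max{M,N} and n ≥ 0, where s_{n} = ⟨Sₙ,Sₙ⟩_{λ,ν},
ζ_{j,n} = Σ_{i=j}^M ã_{i,n+j} ã_{i−j,n} ⟨𝒰,P²_{n+j−i+m}⟩
        + λ Σ_{i=j}^N b̃_{i,n+j} b̃_{i−j,n} ⟨𝒱,Q²_{n+j−i}⟩,
ã_{i,n} = (η_n/η_{n−i}) a_{i,n} and b̃_{i,n} = η_n b_{i,n}. -/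
theorem stmt18 (D : Polynomial ℝ →ₗ[ℝ] Polynomial ℝ) (η : ℕ → ℝ) (m : ℕ)
    (hν : NuData D m η) (hm : 1 ≤ m) (lam : ℝ) (hlam : 0 < lam)
    (U V : Polynomial ℝ →ₗ[ℝ] ℝ) (hU : PosDef U) (hV : PosDef V)
    (P Q S : ℕ → Polynomial ℝ) (hP : IsMOPS U P) (hQ : IsMOPS V Q)
    (hS : IsSobMOPS U V lam D m S)
    (M N : ℕ) (a b : ℕ → ℕ → ℝ) (hcoh : Coherent D η m P Q M N a b)
    (c : ℕ → ℕ → ℝ) (hc0 : ∀ n : ℕ, c 0 n = 1) (hcv : ∀ j n : ℕ, n < j → c j n = 0)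
    (hrel : ∀ n : ℕ,
      P (n + m) + ∑ i ∈ Finset.Icc 1 M, (η n / η (n - i) * a i n) • P (n - i + m)
        = S (n + m) + ∑ j ∈ Finset.Icc 1 (max M N), c j n • S (n - j + m)) :
    ∀ j ≤ max M N, ∀ n : ℕ,
      sob U V lam D m (S (n + m)) (S (n + m)) * c j (n + j)
        = (∑ i ∈ Finset.Icc j M,
              (η (n + j) / η (n + j - i) * a i (n + j)) *
              (η n / η (n - (i - j)) * a (i - j) n) *
              U (P (n + j - i + m) * P (n + j - i + m))
            + lam * ∑ i ∈ Finset.Icc j N,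
              (η (n + j) * b i (n + j)) * (η n * b (i - j) n) *
              V (Q (n + j - i) * Q (n + j - i)))
          - ∑ l ∈ Finset.Icc 1 (max M N - j),
              c l n * c (j + l) (n + j) *
              sob U V lam D m (S (n - l + m)) (S (n - l + m)) :=
  stmt18_general D η m hν lam U V P Q S hP hQ hS M N a b hcoh c hc0 hcv hrel
end
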